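/- arXiv:2410.11441 — 5 statements merged into one kernel-verified Lean document; each statement's English description precedes it below -/
import Mathlib

section
/- In the Piccoli–Rossi minimization, adding the constraints μ̃^S(Ω) ≤ μ^S(Ω) and μ̃^D(Ω) ≤ μ^D(Ω) does not change the infimum: the infimum over pairs of equal-mass measures dominated in total mass by the given marginals equals the unconstrained infimum. -/
open MeasureTheory

/-- `p`-Wasserstein distance, extended by homogeneity to pairs of equal-mass finite
nonnegative measures (infimum over couplings). -/
noncomputable def Wp (p : ℝ) (μ ν : Measure ℝ) : ENNReal :=
  (sInf {c : ENNReal | ∃ γ : Measure (ℝ × ℝ),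
    γ.map Prod.fst = μ ∧ γ.map Prod.snd = ν ∧
    c = ∫⁻ q, ENNReal.ofReal (|q.1 - q.2| ^ p) ∂γ}) ^ (1 / p)

/-- The Piccoli–Rossi objective: `a(|μS(Ω) − ν1(Ω)| + |μD(Ω) − ν2(Ω)|) + b·W_p(ν1, ν2)`,
with absolute values of masses encoded via truncated subtraction in `ℝ≥0∞`. -/
noncomputable def PRcost (a b p : ℝ) (μS μD ν1 ν2 : Measure ℝ) : ENNReal :=
  ENNReal.ofReal a *
    ((μS Set.univ - ν1 Set.univ) + (ν1 Set.univ - μS Set.univ)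
      + (μD Set.univ - ν2 Set.univ) + (ν2 Set.univ - μD Set.univ))
    + ENNReal.ofReal b * Wp p ν1 ν2

open scoped ENNReal

theorem tsub_add_tsub_min_le {α : Type*} [AddCommMonoid α] [LinearOrder α]
    [CanonicallyOrderedAdd α] [Sub α] [OrderedSub α] [IsOrderedAddMonoid α] (x y m : α) :
    (x - min m (min x y)) + (min m (min x y) - x) + (y - min m (min x y)) + (min m (min x y) - y)
      ≤ (x - m) + (m - x) + (y - m) + (m - y) := by
  rcases le_total m (min x y) with hm | hm
  · rw [min_eq_left hm]
  rw [min_eq_right hm]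
  rcases le_total x y with hxy | hxy
  · rw [min_eq_left hxy, tsub_self, tsub_eq_zero_of_le hxy]
    calc 0 + 0 + (y - x) + 0 = y - x := by simp
      _ ≤ (m - x) + (y - m) := by rw [add_comm]; exact tsub_le_tsub_add_tsub
      _ ≤ (x - m) + (m - x) + (y - m) + (m - y) := le_add_right (add_le_add le_add_self le_rfl)
  · rw [min_eq_right hxy, tsub_self, tsub_eq_zero_of_le hxy]
    calc (x - y) + 0 + 0 + 0 = x - y := by simp
      _ ≤ (x - m) + (m - y) := tsub_le_tsub_add_tsub
      _ ≤ (x - m) + (m - x) + (y - m) + (m - y) :=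
        add_le_add (le_add_right (le_add_right le_rfl)) le_rfl

theorem smul_measure_univ_div_self {Ω : Type*} [MeasurableSpace Ω] (ν : Measure Ω)
    [IsFiniteMeasure ν] {t : ℝ≥0∞} (ht : t ≤ ν Set.univ) :
    ((t / ν Set.univ) • ν) Set.univ = t := by
  rw [Measure.smul_apply, smul_eq_mul]
  exact ENNReal.div_mul_cancel' (fun h ↦ nonpos_iff_eq_zero.mp (ht.trans h.le))
    (fun h ↦ absurd h (measure_ne_top ν _))

theorem Wp_smul_le_of_le_one {p : ℝ} (hp : 0 ≤ p) (μ ν : Measure ℝ) {c : ℝ≥0∞} (hc : c ≤ 1) :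
    Wp p (c • μ) (c • ν) ≤ Wp p μ ν := by
  refine ENNReal.rpow_le_rpow (le_sInf ?_) (one_div_nonneg.mpr hp)
  rintro _ ⟨γ, hγμ, hγν, rfl⟩
  refine sInf_le_of_le
    ⟨c • γ, by rw [Measure.map_smul, hγμ], by rw [Measure.map_smul, hγν], rfl⟩ ?_
  rw [lintegral_smul_measure]
  exact mul_le_of_le_one_left' hc

/-- The witness scales both measures by `t / m`, where `m` is their common mass and
`t = min m (min μS(Ω) μD(Ω))`: this cannot increase the Wasserstein term, and clipping the mass
to at most `min μS(Ω) μD(Ω)` cannot increase the mass penalty. -/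
theorem exists_constrained_PRcost_le {p : ℝ} (hp : 0 ≤ p) (a b : ℝ) (μS μD ν1 ν2 : Measure ℝ)
    [IsFiniteMeasure ν1] [IsFiniteMeasure ν2] (hν : ν1 Set.univ = ν2 Set.univ) :
    ∃ ν1' ν2' : Measure ℝ, IsFiniteMeasure ν1' ∧ IsFiniteMeasure ν2' ∧
      ν1' Set.univ = ν2' Set.univ ∧ ν1' Set.univ ≤ μS Set.univ ∧ ν2' Set.univ ≤ μD Set.univ ∧
      PRcost a b p μS μD ν1' ν2' ≤ PRcost a b p μS μD ν1 ν2 := by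
  set m := ν1 Set.univ
  set t := min m (min (μS Set.univ) (μD Set.univ))
  have hc : t / m ≤ 1 := ENNReal.div_le_of_le_mul (by rw [one_mul]; exact min_le_left _ _)
  have hc_top : t / m ≠ ⊤ := ne_top_of_le_ne_top ENNReal.one_ne_top hc
  have hmass1 : ((t / m) • ν1) Set.univ = t := smul_measure_univ_div_self ν1 (min_le_left _ _)
  have hmass2 : ((t / m) • ν2) Set.univ = t := by
    rw [hν]
    exact smul_measure_univ_div_self ν2 (hν ▸ min_le_left _ _)
  refine ⟨(t / m) • ν1, (t / m) • ν2, ν1.smul_finite hc_top, ν2.smul_finite hc_top,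
    hmass1.trans hmass2.symm, hmass1.trans_le ((min_le_right _ _).trans (min_le_left _ _)),
    hmass2.trans_le ((min_le_right _ _).trans (min_le_right _ _)), ?_⟩
  unfold PRcost
  rw [hmass1, hmass2, ← hν]
  gcongr _ * ?_ + _ * ?_
  · exact tsub_add_tsub_min_le _ _ _
  · exact Wp_smul_le_of_le_one hp ν1 ν2 hc

theorem PR_inf_eq_constrained_inf_general (a b p : ℝ) (hp : 1 ≤ p)
    (μS μD : Measure ℝ) :
    sInf {c : ENNReal | ∃ ν1 ν2 : Measure ℝ, IsFiniteMeasure ν1 ∧ IsFiniteMeasure ν2 ∧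
        ν1 Set.univ = ν2 Set.univ ∧ c = PRcost a b p μS μD ν1 ν2}
      = sInf {c : ENNReal | ∃ ν1 ν2 : Measure ℝ, IsFiniteMeasure ν1 ∧ IsFiniteMeasure ν2 ∧
        ν1 Set.univ = ν2 Set.univ ∧
        ν1 Set.univ ≤ μS Set.univ ∧ ν2 Set.univ ≤ μD Set.univ ∧
        c = PRcost a b p μS μD ν1 ν2} := by
  refine le_antisymm (sInf_le_sInf ?_) (le_sInf ?_)
  · rintro _ ⟨ν1, ν2, hν1, hν2, hν, -, -, rfl⟩
    exact ⟨ν1, ν2, hν1, hν2, hν, rfl⟩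
  · rintro _ ⟨ν1, ν2, hν1, hν2, hν, rfl⟩
    obtain ⟨ν1', ν2', hν1', hν2', hν', hS, hD, hcost⟩ :=
      exists_constrained_PRcost_le (zero_le_one.trans hp) a b μS μD ν1 ν2 hν
    exact sInf_le_of_le ⟨ν1', ν2', hν1', hν2', hν', hS, hD, rfl⟩ hcost

/-- In the Piccoli–Rossi minimization, adding the constraints
`ν1(Ω) ≤ μS(Ω)` and `ν2(Ω) ≤ μD(Ω)` does not change the infimum. -/
theorem PR_inf_eq_constrained_inf (a b p : ℝ) (ha : 0 < a) (hb : 0 < b) (hp : 1 ≤ p)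
    (μS μD : Measure ℝ) [IsFiniteMeasure μS] [IsFiniteMeasure μD] :
    sInf {c : ENNReal | ∃ ν1 ν2 : Measure ℝ, IsFiniteMeasure ν1 ∧ IsFiniteMeasure ν2 ∧
        ν1 Set.univ = ν2 Set.univ ∧ c = PRcost a b p μS μD ν1 ν2}
      = sInf {c : ENNReal | ∃ ν1 ν2 : Measure ℝ, IsFiniteMeasure ν1 ∧ IsFiniteMeasure ν2 ∧
        ν1 Set.univ = ν2 Set.univ ∧
        ν1 Set.univ ≤ μS Set.univ ∧ ν2 Set.univ ≤ μD Set.univ ∧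
        c = PRcost a b p μS μD ν1 ν2} :=
  PR_inf_eq_constrained_inf_general a b p hp μS μD
end

section
/- For two finite atomic measures supported on a common finite set of points, the Piccoli–Rossi minimization with atomic competitors reduces to: minimize a·Σ_i(m^S_i + m^D_i) + Σ_{j,k}(b·c_{jk} − 2a)·γ_{jk} over γ ∈ [0,∞)^{N×N} with Σ_k γ_{jk} ≤ m^S_j and Σ_j γ_{jk} ≤ m^D_k; i.e., the value of the original formulation (with remaining masses m̊^S ≤ m^S, m̊^D ≤ m^D and exact marginal constraints on γ) equals the value of this reduced inequality-constrained linear program. -/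
/-!
The exact marginal constraints determine the remaining masses from the plan,
`rS j = ∑ k, γ j k` and `rD k = ∑ j, γ j k`; eliminating them turns `rS ≤ mS`, `rD ≤ mD` into
marginal inequalities, and `0 ≤ rS`, `0 ≤ rD` become automatic. Each unit of transported mass
removes `a` from the cancellation cost at both of its ends, whence the coefficient `b c - 2a`.
So the two sets of attainable values coincide, not only their infima.
-/

open Finset

section
variable {ι : Type*} [Fintype ι]

theorem cancellation_add_transport_eq (c γ : ι → ι → ℝ) (mS mD : ι → ℝ) (a b : ℝ) :
    a * ∑ i, (mS i - ∑ k, γ i k) + a * ∑ i, (mD i - ∑ j, γ j i)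
        + b * ∑ j, ∑ k, c j k * γ j k
      = a * ∑ i, (mS i + mD i) + ∑ j, ∑ k, (b * c j k - 2 * a) * γ j k := by
  have hcol : ∑ i, ∑ j, γ j i = ∑ j, ∑ k, γ j k := sum_comm
  simp only [sum_sub_distrib, sum_add_distrib, hcol, sub_mul, mul_assoc, ← mul_sum]
  ring

theorem exactMarginal_values_eq_subMarginal_values (c : ι → ι → ℝ) (mS mD : ι → ℝ) (a b : ℝ) :
    {v : ℝ | ∃ (γ : ι → ι → ℝ) (rS rD : ι → ℝ),
        (∀ j k, 0 ≤ γ j k) ∧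
        (∀ i, 0 ≤ rS i) ∧ (∀ i, rS i ≤ mS i) ∧
        (∀ i, 0 ≤ rD i) ∧ (∀ i, rD i ≤ mD i) ∧
        (∀ j, ∑ k, γ j k = rS j) ∧ (∀ k, ∑ j, γ j k = rD k) ∧
        v = a * ∑ i, (mS i - rS i) + a * ∑ i, (mD i - rD i) + b * ∑ j, ∑ k, c j k * γ j k}
      = {v : ℝ | ∃ γ : ι → ι → ℝ,
        (∀ j k, 0 ≤ γ j k) ∧
        (∀ j, ∑ k, γ j k ≤ mS j) ∧ (∀ k, ∑ j, γ j k ≤ mD k) ∧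
        v = a * ∑ i, (mS i + mD i) + ∑ j, ∑ k, (b * c j k - 2 * a) * γ j k} := by
  ext v
  constructor
  · rintro ⟨γ, rS, rD, hγ, -, hrS, -, hrD, hS, hD, rfl⟩
    obtain rfl : rS = fun j => ∑ k, γ j k := funext fun j => (hS j).symm
    obtain rfl : rD = fun k => ∑ j, γ j k := funext fun k => (hD k).symm
    exact ⟨γ, hγ, hrS, hrD, cancellation_add_transport_eq c γ mS mD a b⟩
  · rintro ⟨γ, hγ, hrS, hrD, rfl⟩
    exact ⟨γ, fun j => ∑ k, γ j k, fun k => ∑ j, γ j k, hγ,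
      fun j => sum_nonneg fun k _ => hγ j k, hrS,
      fun k => sum_nonneg fun j _ => hγ j k, hrD, fun _ => rfl, fun _ => rfl,
      (cancellation_add_transport_eq c γ mS mD a b).symm⟩

end

theorem PR_discrete_reduction_general (N : ℕ) (x : Fin N → ℝ) (p : ℝ)
    (mS mD : Fin N → ℝ)
    (a b : ℝ) :
    sInf {v : ℝ | ∃ (γ : Fin N → Fin N → ℝ) (rS rD : Fin N → ℝ),
        (∀ j k, 0 ≤ γ j k) ∧
        (∀ i, 0 ≤ rS i) ∧ (∀ i, rS i ≤ mS i) ∧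
        (∀ i, 0 ≤ rD i) ∧ (∀ i, rD i ≤ mD i) ∧
        (∀ j, ∑ k, γ j k = rS j) ∧ (∀ k, ∑ j, γ j k = rD k) ∧
        v = a * ∑ i, (mS i - rS i) + a * ∑ i, (mD i - rD i)
            + b * ∑ j, ∑ k, |x j - x k| ^ p * γ j k}
      = sInf {v : ℝ | ∃ γ : Fin N → Fin N → ℝ,
        (∀ j k, 0 ≤ γ j k) ∧
        (∀ j, ∑ k, γ j k ≤ mS j) ∧ (∀ k, ∑ j, γ j k ≤ mD k) ∧
        v = a * ∑ i, (mS i + mD i)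
            + ∑ j, ∑ k, (b * |x j - x k| ^ p - 2 * a) * γ j k} :=
  congrArg sInf <|
    exactMarginal_values_eq_subMarginal_values (fun j k => |x j - x k| ^ p) mS mD a b

/-- For two finite atomic measures on a common finite set of points, the
Piccoli–Rossi minimization over remaining masses `rS ≤ mS`, `rD ≤ mD` and exact
marginal constraints equals the reduced inequality-constrained linear program
minimizing `a·Σ(mS+mD) + Σ (b·c − 2a)·γ`. -/
theorem PR_discrete_reduction (N : ℕ) (x : Fin N → ℝ) (p : ℝ) (hp : 1 ≤ p)
    (mS mD : Fin N → ℝ) (hS : ∀ i, 0 ≤ mS i) (hD : ∀ i, 0 ≤ mD i)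
    (a b : ℝ) (ha : 0 < a) (hb : 0 < b) :
    sInf {v : ℝ | ∃ (γ : Fin N → Fin N → ℝ) (rS rD : Fin N → ℝ),
        (∀ j k, 0 ≤ γ j k) ∧
        (∀ i, 0 ≤ rS i) ∧ (∀ i, rS i ≤ mS i) ∧
        (∀ i, 0 ≤ rD i) ∧ (∀ i, rD i ≤ mD i) ∧
        (∀ j, ∑ k, γ j k = rS j) ∧ (∀ k, ∑ j, γ j k = rD k) ∧
        v = a * ∑ i, (mS i - rS i) + a * ∑ i, (mD i - rD i)
            + b * ∑ j, ∑ k, |x j - x k| ^ p * γ j k}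
      = sInf {v : ℝ | ∃ γ : Fin N → Fin N → ℝ,
        (∀ j k, 0 ≤ γ j k) ∧
        (∀ j, ∑ k, γ j k ≤ mS j) ∧ (∀ k, ∑ j, γ j k ≤ mD k) ∧
        v = a * ∑ i, (mS i + mD i)
            + ∑ j, ∑ k, (b * |x j - x k| ^ p - 2 * a) * γ j k} :=
  PR_discrete_reduction_general N x p mS mD a b
end

section
/- The square root of H_g defines a metric on the cone: d((x,r),(y,s)) = √(r + s − 2√(rs)·e^{−|x−y|²/2}) satisfies the triangle inequality on the quotient of ℝ × [0,∞) where all points (x,0) are identified. -/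
/-- The cone cost `H_g(x, r; y, s) = r + s − 2√(rs)·e^{−|x−y|²/2}`. -/
noncomputable def Hg (x r y s : ℝ) : ℝ :=
  r + s - 2 * Real.sqrt (r * s) * Real.exp (-(|x - y| ^ 2) / 2)

/-! Write the Gaussian kernel as a cosine, `exp (-d² / 2) = cos θ(d)` with `θ(d) = gaussAngle d ∈ [0, π/2]`.
Then `H_g(x, r; y, s) = √r² + √s² − 2 √r √s cos θ(|x − y|)` is a squared distance in the plane
(law of cosines). The angle is subadditive: `θ(a + b) ≤ θ(a) + θ(b)` amounts, after squaring, to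
`(1 − e^{−ab})² ≤ (ab)² ≤ (e^{a²} − 1)(e^{b²} − 1)`. Hence `θ(|x − z|) ≤ θ(|x − y|) + θ(|y − z|) ≤ π`,
and placing `√r, √s, √u` at the angles `θ(|x − y|) + θ(|y − z|)`, `θ(|y − z|)`, `0`, the triangle
inequality in `ℂ` gives the claim because `cos` is decreasing on `[0, π]`. -/

open Real

theorem norm_ofReal_mul_exp_I_sub (a b α β : ℝ) :
    ‖(a : ℂ) * Complex.exp (α * Complex.I) - b * Complex.exp (β * Complex.I)‖ =
      √(a ^ 2 + b ^ 2 - 2 * a * b * cos (α - β)) := by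
  rw [Complex.norm_def, Complex.normSq_apply]
  simp only [Complex.sub_re, Complex.sub_im, Complex.re_ofReal_mul, Complex.im_ofReal_mul,
    Complex.exp_ofReal_mul_I_re, Complex.exp_ofReal_mul_I_im, cos_sub]
  congr 1
  linear_combination a ^ 2 * sin_sq_add_cos_sq α + b ^ 2 * sin_sq_add_cos_sq β

theorem sqrt_law_of_cosines_add_le (a b c α β : ℝ) :
    √(a ^ 2 + c ^ 2 - 2 * a * c * cos (α + β)) ≤
      √(a ^ 2 + b ^ 2 - 2 * a * b * cos α) + √(b ^ 2 + c ^ 2 - 2 * b * c * cos β) := by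
  have h := norm_sub_le_norm_sub_add_norm_sub ((a : ℂ) * Complex.exp (↑(α + β) * Complex.I))
    ((b : ℂ) * Complex.exp (β * Complex.I)) ((c : ℂ) * Complex.exp ((0 : ℝ) * Complex.I))
  simpa only [norm_ofReal_mul_exp_I_sub, sub_zero, add_sub_cancel_right] using h

theorem one_sub_exp_neg_mul_sq_le {a b : ℝ} (hab : 0 ≤ a * b) :
    (1 - exp (-(a * b))) ^ 2 ≤ (exp (a ^ 2) - 1) * (exp (b ^ 2) - 1) := by
  have h₀ : 0 ≤ 1 - exp (-(a * b)) := sub_nonneg.2 (exp_le_one_iff.2 (neg_nonpos.2 hab))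
  have h₁ : 1 - exp (-(a * b)) ≤ a * b := by linarith [add_one_le_exp (-(a * b))]
  have ha : a ^ 2 ≤ exp (a ^ 2) - 1 := by linarith [add_one_le_exp (a ^ 2)]
  have hb : b ^ 2 ≤ exp (b ^ 2) - 1 := by linarith [add_one_le_exp (b ^ 2)]
  calc (1 - exp (-(a * b))) ^ 2 ≤ (a * b) ^ 2 := pow_le_pow_left₀ h₀ h₁ 2
    _ = a ^ 2 * b ^ 2 := mul_pow a b 2
    _ ≤ (exp (a ^ 2) - 1) * (exp (b ^ 2) - 1) :=
      mul_le_mul ha hb (sq_nonneg b) (by linarith [sq_nonneg a])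

noncomputable def gaussAngle (d : ℝ) : ℝ := arccos (exp (-(d ^ 2) / 2))

theorem cos_gaussAngle (d : ℝ) : cos (gaussAngle d) = exp (-(d ^ 2) / 2) :=
  cos_arccos (by linarith [exp_pos (-(d ^ 2) / 2)]) (exp_le_one_iff.2 (by nlinarith [sq_nonneg d]))

theorem sin_gaussAngle (d : ℝ) : sin (gaussAngle d) = √(1 - exp (-(d ^ 2))) := by
  rw [gaussAngle, sin_arccos, ← exp_nat_mul]
  ring_nf

theorem gaussAngle_nonneg (d : ℝ) : 0 ≤ gaussAngle d := arccos_nonneg _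

theorem gaussAngle_le_pi_div_two (d : ℝ) : gaussAngle d ≤ π / 2 :=
  arccos_le_pi_div_two.2 (exp_pos _).le

theorem gaussAngle_mono {d e : ℝ} (hd : 0 ≤ d) (hde : d ≤ e) : gaussAngle d ≤ gaussAngle e :=
  arccos_le_arccos (exp_le_exp.2 (by nlinarith))

theorem gaussAngle_add_le {a b : ℝ} (ha : 0 ≤ a) (hb : 0 ≤ b) :
    gaussAngle (a + b) ≤ gaussAngle a + gaussAngle b := by
  have hsin : exp (-(a ^ 2) / 2) * exp (-(b ^ 2) / 2) * (1 - exp (-(a * b))) ≤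
      sin (gaussAngle a) * sin (gaussAngle b) := by
    rw [sin_gaussAngle, sin_gaussAngle, ← sqrt_mul (by simp [exp_le_one_iff, sq_nonneg])]
    apply le_sqrt_of_sq_le
    calc (exp (-(a ^ 2) / 2) * exp (-(b ^ 2) / 2) * (1 - exp (-(a * b)))) ^ 2
        = exp (-(a ^ 2)) * exp (-(b ^ 2)) * (1 - exp (-(a * b))) ^ 2 := by
          rw [mul_pow, mul_pow, ← exp_nat_mul, ← exp_nat_mul]; ring_nf
      _ ≤ exp (-(a ^ 2)) * exp (-(b ^ 2)) * ((exp (a ^ 2) - 1) * (exp (b ^ 2) - 1)) := by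
          gcongr; exact one_sub_exp_neg_mul_sq_le (mul_nonneg ha hb)
      _ = (1 - exp (-(a ^ 2))) * (1 - exp (-(b ^ 2))) := by
          rw [exp_neg, exp_neg]; field_simp
  have hcos : cos (gaussAngle a + gaussAngle b) ≤ exp (-((a + b) ^ 2) / 2) := by
    have hexp : exp (-((a + b) ^ 2) / 2) =
        exp (-(a ^ 2) / 2) * exp (-(b ^ 2) / 2) * exp (-(a * b)) := by
      rw [← exp_add, ← exp_add]; ring_nf
    rw [cos_add, cos_gaussAngle, cos_gaussAngle, hexp]
    linarith
  calc gaussAngle (a + b) ≤ arccos (cos (gaussAngle a + gaussAngle b)) := arccos_le_arccos hcos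
    _ = gaussAngle a + gaussAngle b :=
      arccos_cos (add_nonneg (gaussAngle_nonneg a) (gaussAngle_nonneg b))
        (by linarith [gaussAngle_le_pi_div_two a, gaussAngle_le_pi_div_two b])

theorem gaussAngle_dist_triangle {X : Type*} [PseudoMetricSpace X] (x y z : X) :
    gaussAngle (dist x z) ≤ gaussAngle (dist x y) + gaussAngle (dist y z) :=
  (gaussAngle_mono dist_nonneg (dist_triangle x y z)).trans
    (gaussAngle_add_le dist_nonneg dist_nonneg)

theorem Hg_eq_law_of_cosines {r s : ℝ} (x y : ℝ) (hr : 0 ≤ r) (hs : 0 ≤ s) :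
    Hg x r y s = √r ^ 2 + √s ^ 2 - 2 * √r * √s * cos (gaussAngle (dist x y)) := by
  rw [Hg, cos_gaussAngle, Real.dist_eq, sq_sqrt hr, sq_sqrt hs, sqrt_mul hr]
  ring

/-- `√H_g` satisfies the triangle inequality on the cone over `ℝ`
(equivalently on the quotient of `ℝ × [0,∞)` identifying all points `(x, 0)`,
on which `√H_g` is well defined since it vanishes on pairs of apex points). -/
theorem sqrt_Hg_triangle (x y z r s u : ℝ) (hr : 0 ≤ r) (hs : 0 ≤ s) (hu : 0 ≤ u) :
    Real.sqrt (Hg x r z u) ≤ Real.sqrt (Hg x r y s) + Real.sqrt (Hg y s z u) := by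
  set α := gaussAngle (dist x y)
  set β := gaussAngle (dist y z)
  have hcos : cos (α + β) ≤ cos (gaussAngle (dist x z)) :=
    cos_le_cos_of_nonneg_of_le_pi (gaussAngle_nonneg _)
      (by linarith [gaussAngle_le_pi_div_two (dist x y), gaussAngle_le_pi_div_two (dist y z)])
      (gaussAngle_dist_triangle x y z)
  calc √(Hg x r z u) ≤ √(√r ^ 2 + √u ^ 2 - 2 * √r * √u * cos (α + β)) := by
        rw [Hg_eq_law_of_cosines x z hr hu]
        gcongr
    _ ≤ √(Hg x r y s) + √(Hg y s z u) := by
        rw [Hg_eq_law_of_cosines x y hr hs, Hg_eq_law_of_cosines y z hs hu]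
        exact sqrt_law_of_cosines_add_le _ _ _ α β
end

section
/- The supremum of the dual discrete GHK objective over the feasible set is attained: the set {(φ,ψ) ∈ ℝ^N × ℝ^N : φ_j + ψ_k ≤ c_{jk} for all j,k} contains a maximizer of f(φ,ψ) = a·Σ_j m^S_j(1 − e^{−bφ_j/a}) + a·Σ_k m^D_k(1 − e^{−bψ_k/a}), provided every m^S_j > 0 and every m^D_k > 0. -/
/-- If `-S ≤ a * (m * (1 - exp (-(b*t)/a)))` with `a, b, m > 0` and `S ≥ 0`,
then `t` is bounded below by `-((a/b) * log (1 + S/(a*m)))`. -/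
lemma GHK_aux_lower (a b m S t : ℝ) (ha : 0 < a) (hb : 0 < b) (hm : 0 < m) (hSnn : 0 ≤ S)
    (h : -S ≤ a * (m * (1 - Real.exp (-(b * t) / a)))) :
    -((a / b) * Real.log (1 + S / (a * m))) ≤ t := by
  have ham : 0 < a * m := mul_pos ha hm
  have hy : (0:ℝ) < 1 + S / (a * m) := by positivity
  have h1 : Real.exp (-(b * t) / a) ≤ 1 + S / (a * m) := by
    rw [← sub_nonneg]
    have hE := h
    have : a * m * Real.exp (-(b * t) / a) ≤ a * m + S := by nlinarith
    rw [← sub_nonneg] at this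
    have := div_nonneg this ham.le
    have heq : (a * m + S - a * m * Real.exp (-(b * t) / a)) / (a * m)
        = 1 + S / (a * m) - Real.exp (-(b * t) / a) := by
      field_simp
    rwa [heq] at this
  have h2 : -(b * t) / a ≤ Real.log (1 + S / (a * m)) :=
    (Real.le_log_iff_exp_le hy).mpr h1
  have h3 : -(b * t) ≤ Real.log (1 + S / (a * m)) * a := (div_le_iff₀ ha).mp h2
  rw [neg_le, div_mul_eq_mul_div, le_div_iff₀ hb]
  nlinarith [h3]

/-- A sum `∑ m i * g i` with `0 < m i` and `g i ≤ 1` is at most `m j * g j + ∑ m i`. -/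
lemma GHK_aux_extract (n : ℕ) (m g : Fin n → ℝ) (hm : ∀ i, 0 < m i) (hg : ∀ i, g i ≤ 1)
    (j : Fin n) : ∑ i, m i * g i ≤ m j * g j + ∑ i, m i := by
  have e1 : ∑ i, m i * g i = m j * g j + ∑ i ∈ Finset.univ.erase j, m i * g i :=
    (Finset.add_sum_erase _ _ (Finset.mem_univ j)).symm
  rw [e1]
  have e2 : ∑ i ∈ Finset.univ.erase j, m i * g i ≤ ∑ i ∈ Finset.univ.erase j, m i :=
    Finset.sum_le_sum fun i _ => by nlinarith [hm i, hg i]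
  have e3 : ∑ i ∈ Finset.univ.erase j, m i ≤ ∑ i, m i :=
    Finset.sum_le_sum_of_subset_of_nonneg (Finset.subset_univ _) fun i _ _ => (hm i).le
  linarith

/-- The dual discrete GHK problem attains its supremum: the feasible set
`{(φ, ψ) : φ_j + ψ_k ≤ |x_j − x_k|²}` contains a maximizer of the dual objective,
provided all masses are strictly positive. -/
theorem GHK_dual_maximizer_exists (N : ℕ) (x : Fin N → ℝ) (mS mD : Fin N → ℝ)
    (hS : ∀ j, 0 < mS j) (hD : ∀ k, 0 < mD k)
    (a b : ℝ) (ha : 0 < a) (hb : 0 < b) :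
    ∃ φ ψ : Fin N → ℝ, (∀ j k, φ j + ψ k ≤ |x j - x k| ^ 2) ∧
      ∀ φ' ψ' : Fin N → ℝ, (∀ j k, φ' j + ψ' k ≤ |x j - x k| ^ 2) →
        a * ∑ j, mS j * (1 - Real.exp (-(b * φ' j) / a))
          + a * ∑ k, mD k * (1 - Real.exp (-(b * ψ' k) / a))
        ≤ a * ∑ j, mS j * (1 - Real.exp (-(b * φ j) / a))
          + a * ∑ k, mD k * (1 - Real.exp (-(b * ψ k) / a)) := by
  -- the objective as a function on pairs
  set F : (Fin N → ℝ) × (Fin N → ℝ) → ℝ := fun p =>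
    a * ∑ j, mS j * (1 - Real.exp (-(b * p.1 j) / a))
      + a * ∑ k, mD k * (1 - Real.exp (-(b * p.2 k) / a)) with hFdef
  have hFcont : Continuous F := by fun_prop
  have hsSnn : (0:ℝ) ≤ ∑ j, mS j := Finset.sum_nonneg fun i _ => (hS i).le
  have hsDnn : (0:ℝ) ≤ ∑ k, mD k := Finset.sum_nonneg fun i _ => (hD i).le
  set S : ℝ := a * ((∑ j, mS j) + (∑ k, mD k)) with hSdef
  have hSnn : 0 ≤ S := by positivity
  -- lower bounds for coordinates when F ≥ 0
  set loS : Fin N → ℝ := fun j => -((a / b) * Real.log (1 + S / (a * mS j))) with hloS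
  set loD : Fin N → ℝ := fun k => -((a / b) * Real.log (1 + S / (a * mD k))) with hloD
  have hlogS_nn : ∀ j, 0 ≤ (a / b) * Real.log (1 + S / (a * mS j)) := by
    intro j
    have h1 : 0 ≤ S / (a * mS j) := div_nonneg hSnn (mul_pos ha (hS j)).le
    exact mul_nonneg (by positivity) (Real.log_nonneg (by linarith))
  have hlogD_nn : ∀ k, 0 ≤ (a / b) * Real.log (1 + S / (a * mD k)) := by
    intro k
    have h1 : 0 ≤ S / (a * mD k) := div_nonneg hSnn (mul_pos ha (hD k)).le
    exact mul_nonneg (by positivity) (Real.log_nonneg (by linarith))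
  set M : ℝ := ∑ j, ∑ k, |x j - x k| ^ 2 with hMdef
  have hMnn : 0 ≤ M := Finset.sum_nonneg fun j _ => Finset.sum_nonneg fun k _ => by positivity
  have hcM : ∀ j k : Fin N, |x j - x k| ^ 2 ≤ M := by
    intro j k
    have h1 : |x j - x k| ^ 2 ≤ ∑ k', |x j - x k'| ^ 2 :=
      Finset.single_le_sum (f := fun k' => |x j - x k'| ^ 2)
        (fun k' _ => by positivity) (Finset.mem_univ k)
    have h2 : ∑ k', |x j - x k'| ^ 2 ≤ M :=
      Finset.single_le_sum (f := fun j' => ∑ k', |x j' - x k'| ^ 2)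
        (fun j' _ => Finset.sum_nonneg fun k' _ => by positivity) (Finset.mem_univ j)
    linarith
  set hiS : ℝ := M + ∑ k, (a / b) * Real.log (1 + S / (a * mD k)) with hhiS
  set hiD : ℝ := M + ∑ j, (a / b) * Real.log (1 + S / (a * mS j)) with hhiD
  have hhiSnn : 0 ≤ hiS := add_nonneg hMnn (Finset.sum_nonneg fun k _ => hlogD_nn k)
  have hhiDnn : 0 ≤ hiD := add_nonneg hMnn (Finset.sum_nonneg fun j _ => hlogS_nn j)
  -- key: feasible points with F ≥ 0 lie in the box
  have hbox : ∀ p : (Fin N → ℝ) × (Fin N → ℝ),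
      (∀ j k, p.1 j + p.2 k ≤ |x j - x k| ^ 2) → 0 ≤ F p →
      p ∈ Set.Icc ((loS, loD) : (Fin N → ℝ) × (Fin N → ℝ)) ((fun _ => hiS), fun _ => hiD) := by
    intro p hfeas hF0
    have hg1 : ∀ t : ℝ, 1 - Real.exp (-(b * t) / a) ≤ 1 := fun t => by
      have := Real.exp_pos (-(b * t) / a); linarith
    -- lower bound on the φ-coordinates
    have hloSle : ∀ j, loS j ≤ p.1 j := by
      intro j
      apply GHK_aux_lower a b (mS j) S (p.1 j) ha hb (hS j) hSnn
      have e1 : ∑ i, mS i * (1 - Real.exp (-(b * p.1 i) / a))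
          ≤ mS j * (1 - Real.exp (-(b * p.1 j) / a)) + ∑ i, mS i :=
        GHK_aux_extract N mS _ hS (fun i => hg1 _) j
      have e2 : ∑ k, mD k * (1 - Real.exp (-(b * p.2 k) / a)) ≤ ∑ k, mD k :=
        Finset.sum_le_sum fun k _ => by nlinarith [hD k, hg1 (p.2 k)]
      have hF0' : 0 ≤ a * ∑ i, mS i * (1 - Real.exp (-(b * p.1 i) / a))
          + a * ∑ k, mD k * (1 - Real.exp (-(b * p.2 k) / a)) := hF0
      nlinarith [mul_le_mul_of_nonneg_left e1 ha.le, mul_le_mul_of_nonneg_left e2 ha.le]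
    -- lower bound on the ψ-coordinates
    have hloDle : ∀ k, loD k ≤ p.2 k := by
      intro k
      apply GHK_aux_lower a b (mD k) S (p.2 k) ha hb (hD k) hSnn
      have e1 : ∑ i, mD i * (1 - Real.exp (-(b * p.2 i) / a))
          ≤ mD k * (1 - Real.exp (-(b * p.2 k) / a)) + ∑ i, mD i :=
        GHK_aux_extract N mD _ hD (fun i => hg1 _) k
      have e2 : ∑ j, mS j * (1 - Real.exp (-(b * p.1 j) / a)) ≤ ∑ j, mS j :=
        Finset.sum_le_sum fun j _ => by nlinarith [hS j, hg1 (p.1 j)]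
      have hF0' : 0 ≤ a * ∑ i, mS i * (1 - Real.exp (-(b * p.1 i) / a))
          + a * ∑ k, mD k * (1 - Real.exp (-(b * p.2 k) / a)) := hF0
      nlinarith [mul_le_mul_of_nonneg_left e1 ha.le, mul_le_mul_of_nonneg_left e2 ha.le]
    constructor
    · exact ⟨fun j => hloSle j, fun k => hloDle k⟩
    · constructor
      · intro j
        have h1 : p.1 j ≤ |x j - x j| ^ 2 - p.2 j := by linarith [hfeas j j]
        have h2 : -p.2 j ≤ (a / b) * Real.log (1 + S / (a * mD j)) := by
          have := hloDle j; simp only [hloD] at this; linarith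
        have h3 : (a / b) * Real.log (1 + S / (a * mD j))
            ≤ ∑ k, (a / b) * Real.log (1 + S / (a * mD k)) :=
          Finset.single_le_sum (fun k _ => hlogD_nn k) (Finset.mem_univ j)
        have := hcM j j
        simp only [hhiS]
        linarith
      · intro k
        have h1 : p.2 k ≤ |x k - x k| ^ 2 - p.1 k := by linarith [hfeas k k]
        have h2 : -p.1 k ≤ (a / b) * Real.log (1 + S / (a * mS k)) := by
          have := hloSle k; simp only [hloS] at this; linarith
        have h3 : (a / b) * Real.log (1 + S / (a * mS k))
            ≤ ∑ j, (a / b) * Real.log (1 + S / (a * mS j)) :=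
          Finset.single_le_sum (fun j _ => hlogS_nn j) (Finset.mem_univ k)
        have := hcM k k
        simp only [hhiD]
        linarith
  -- the compact set K
  set C : Set ((Fin N → ℝ) × (Fin N → ℝ)) :=
    {p | (∀ j k, p.1 j + p.2 k ≤ |x j - x k| ^ 2) ∧ 0 ≤ F p} with hCdef
  have hCclosed : IsClosed C := by
    have h1 : C = (⋂ j, ⋂ k, {p : (Fin N → ℝ) × (Fin N → ℝ) | p.1 j + p.2 k ≤ |x j - x k| ^ 2})
        ∩ {p | 0 ≤ F p} := by
      ext p; simp [hCdef, Set.mem_iInter]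
    rw [h1]
    refine IsClosed.inter ?_ (isClosed_le continuous_const hFcont)
    exact isClosed_iInter fun j => isClosed_iInter fun k =>
      isClosed_le (by fun_prop) continuous_const
  set K : Set ((Fin N → ℝ) × (Fin N → ℝ)) :=
    Set.Icc ((loS, loD) : (Fin N → ℝ) × (Fin N → ℝ)) ((fun _ => hiS), fun _ => hiD) ∩ C
    with hKdef
  have hKcomp : IsCompact K := isCompact_Icc.inter_right hCclosed
  -- (0,0) is in K
  have hzero_feas : ∀ j k : Fin N, (fun _ : Fin N => (0:ℝ)) j + (fun _ : Fin N => (0:ℝ)) k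
      ≤ |x j - x k| ^ 2 := fun j k => by simp; positivity
  have hF0zero : F ((fun _ => 0), fun _ => 0) = 0 := by simp [hFdef]
  have hzeroK : ((fun _ => (0:ℝ)), fun _ => (0:ℝ)) ∈ K := by
    refine ⟨hbox _ hzero_feas (by rw [hF0zero]), hzero_feas, by rw [hF0zero]⟩
  have hKne : K.Nonempty := ⟨_, hzeroK⟩
  -- extreme value theorem
  obtain ⟨p, hpK, hpmax⟩ := hKcomp.exists_isMaxOn hKne hFcont.continuousOn
  refine ⟨p.1, p.2, hpK.2.1, ?_⟩
  intro φ' ψ' hfeas'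
  have hFp' : F (φ', ψ') = a * ∑ j, mS j * (1 - Real.exp (-(b * φ' j) / a))
      + a * ∑ k, mD k * (1 - Real.exp (-(b * ψ' k) / a)) := rfl
  have hFp : F p = a * ∑ j, mS j * (1 - Real.exp (-(b * p.1 j) / a))
      + a * ∑ k, mD k * (1 - Real.exp (-(b * p.2 k) / a)) := rfl
  rw [← hFp', ← hFp]
  by_cases h0 : 0 ≤ F (φ', ψ')
  · exact hpmax ⟨hbox _ hfeas' h0, hfeas', h0⟩
  · have h1 : F ((fun _ => 0), fun _ => 0) ≤ F p := hpmax hzeroK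
    rw [hF0zero] at h1
    linarith
end

section
/- The Figalli–Gigli distance on an open bounded interval Ω = (x_min, x_max) is not greater than the Piccoli–Rossi distance in general; more specifically, for any two finite atomic measures supported in Ω, the Figalli–Gigli value in the LP formulation is bounded above by the cost of transporting all of each measure to its nearest boundary point: W^FG_1(μ^S, μ^D) ≤ ∫_Ω dist(x, ∂Ω) dμ^S + ∫_Ω dist(x, ∂Ω) dμ^D. -/
open MeasureTheory

/-- The Figalli–Gigli distance (`p = 1`) on the open bounded interval
`Ω = (xmin, xmax)`: infimum of `∫ |x − y| dγ` over nonnegative finite measures `γ` on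
`Ω̄ × Ω̄` whose marginals restricted to `Ω` are the prescribed measures. -/
noncomputable def FG1 (xmin xmax : ℝ) (μS μD : Measure ℝ) : ENNReal :=
  sInf {c : ENNReal | ∃ γ : Measure (ℝ × ℝ),
    γ ((Set.Icc xmin xmax ×ˢ Set.Icc xmin xmax)ᶜ) = 0 ∧
    (γ.map Prod.fst).restrict (Set.Ioo xmin xmax) = μS ∧
    (γ.map Prod.snd).restrict (Set.Ioo xmin xmax) = μD ∧
    c = ∫⁻ q, ENNReal.ofReal |q.1 - q.2| ∂γ}

/-! Send every source atom to its nearest endpoint of `Ω` and draw every target atom from its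
nearest endpoint. Mass sitting on `∂Ω` is invisible to the marginal constraints, which only see
the restrictions to `Ω`, so this plan is admissible and its cost is exactly the boundary cost. -/

open Set ENNReal

section NearestEndpoint

variable {a b x : ℝ}

noncomputable def nearestEndpoint (a b x : ℝ) : ℝ := if x - a ≤ b - x then a else b

lemma measurable_nearestEndpoint (a b : ℝ) : Measurable (nearestEndpoint a b) :=
  Measurable.ite (measurableSet_le (by fun_prop) (by fun_prop)) measurable_const measurable_const

lemma nearestEndpoint_mem_Icc (hx : x ∈ Icc a b) : nearestEndpoint a b x ∈ Icc a b := by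
  unfold nearestEndpoint
  split_ifs <;> constructor <;> linarith [hx.1, hx.2]

lemma nearestEndpoint_notMem_Ioo (a b x : ℝ) : nearestEndpoint a b x ∉ Ioo a b := by
  unfold nearestEndpoint
  split_ifs <;> simp

lemma abs_sub_nearestEndpoint (hx : x ∈ Icc a b) :
    |x - nearestEndpoint a b x| = min (x - a) (b - x) := by
  unfold nearestEndpoint
  split_ifs with h
  · rw [abs_of_nonneg (by linarith [hx.1]), min_eq_left h]
  · rw [abs_of_nonpos (by linarith [hx.2]), min_eq_right (by linarith), neg_sub]

end NearestEndpoint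

section BoundaryCoupling

variable {a b : ℝ} {μ : Measure ℝ}

lemma map_nearestEndpoint_restrict_Ioo_eq_zero :
    (μ.map (nearestEndpoint a b)).restrict (Ioo a b) = 0 := by
  have : nearestEndpoint a b ⁻¹' Ioo a b = ∅ :=
    eq_empty_of_forall_notMem fun y => nearestEndpoint_notMem_Ioo a b y
  rw [Measure.restrict_eq_zero, Measure.map_apply (measurable_nearestEndpoint a b)
    measurableSet_Ioo, this, measure_empty]

lemma lintegral_abs_sub_nearestEndpoint (hμ : ∀ᵐ x ∂μ, x ∈ Ioo a b) :
    ∫⁻ x, ENNReal.ofReal |x - nearestEndpoint a b x| ∂μ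
      = ∫⁻ x, ENNReal.ofReal (min (x - a) (b - x)) ∂μ :=
  lintegral_congr_ae <| hμ.mono fun _ hx =>
    congrArg ENNReal.ofReal (abs_sub_nearestEndpoint (Ioo_subset_Icc_self hx))

theorem FG1_le_lintegral_boundary_dist (μS μD : Measure ℝ)
    (hS : ∀ᵐ x ∂μS, x ∈ Ioo a b) (hD : ∀ᵐ x ∂μD, x ∈ Ioo a b) :
    FG1 a b μS μD ≤ ∫⁻ x, ENNReal.ofReal (min (x - a) (b - x)) ∂μS
      + ∫⁻ x, ENNReal.ofReal (min (x - a) (b - x)) ∂μD := by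
  set e := nearestEndpoint a b
  have he : Measurable e := measurable_nearestEndpoint a b
  refine sInf_le ⟨μS.map (fun x => (x, e x)) + μD.map (fun x => (e x, x)), ?_, ?_, ?_, ?_⟩
  · have hK : MeasurableSet {q : ℝ × ℝ | q ∈ Icc a b ×ˢ Icc a b} :=
      measurableSet_Icc.prod measurableSet_Icc
    have he_mem : ∀ x ∈ Ioo a b, e x ∈ Icc a b := fun x hx =>
      nearestEndpoint_mem_Icc (Ioo_subset_Icc_self hx)
    change ∀ᵐ q ∂(_ : Measure (ℝ × ℝ)), q ∈ Icc a b ×ˢ Icc a b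
    rw [ae_add_measure_iff, ae_map_iff (by fun_prop) hK, ae_map_iff (by fun_prop) hK]
    exact ⟨hS.mono fun x hx => ⟨Ioo_subset_Icc_self hx, he_mem x hx⟩,
      hD.mono fun x hx => ⟨he_mem x hx, Ioo_subset_Icc_self hx⟩⟩
  · change (Measure.fst _).restrict _ = _
    rw [Measure.fst_add, Measure.fst_map_prodMk he, Measure.fst_map_prodMk measurable_id',
      Measure.map_id', Measure.restrict_add, Measure.restrict_eq_self_of_ae_mem hS,
      map_nearestEndpoint_restrict_Ioo_eq_zero, add_zero]
  · change (Measure.snd _).restrict _ = _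
    rw [Measure.snd_add, Measure.snd_map_prodMk measurable_id', Measure.snd_map_prodMk he,
      Measure.map_id', Measure.restrict_add, Measure.restrict_eq_self_of_ae_mem hD,
      map_nearestEndpoint_restrict_Ioo_eq_zero, zero_add]
  · rw [lintegral_add_measure, lintegral_map (by fun_prop) (by fun_prop),
      lintegral_map (by fun_prop) (by fun_prop), lintegral_abs_sub_nearestEndpoint hS]
    simp_rw [abs_sub_comm (e _)]
    rw [lintegral_abs_sub_nearestEndpoint hD]

end BoundaryCoupling

section Atomic

variable {α ι : Type*} [MeasurableSpace α] [MeasurableSingletonClass α]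

lemma ae_mem_sum_smul_dirac {s : Finset ι} {c : ι → ℝ≥0∞} {x : ι → α} {t : Set α}
    (hx : ∀ i ∈ s, x i ∈ t) :
    ∀ᵐ y ∂(∑ i ∈ s, c i • Measure.dirac (x i)), y ∈ t := by
  change t ∈ ae _
  rw [mem_ae_iff, Measure.finsetSum_apply]
  exact Finset.sum_eq_zero fun i hi => by simp [hx i hi]

lemma lintegral_ofReal_sum_smul_dirac (s : Finset ι) {m : ι → ℝ} (x : ι → α)
    (f : α → ℝ) (hm : ∀ i ∈ s, 0 ≤ m i) (hf : ∀ i ∈ s, 0 ≤ f (x i)) :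
    ∫⁻ y, ENNReal.ofReal (f y) ∂(∑ i ∈ s, ENNReal.ofReal (m i) • Measure.dirac (x i))
      = ENNReal.ofReal (∑ i ∈ s, m i * f (x i)) := by
  rw [lintegral_finsetSum_measure, ENNReal.ofReal_sum_of_nonneg fun i hi =>
    mul_nonneg (hm i hi) (hf i hi)]
  refine Finset.sum_congr rfl fun i hi => ?_
  rw [lintegral_smul_measure, lintegral_dirac, smul_eq_mul, ENNReal.ofReal_mul (hm i hi)]

end Atomic

theorem FG1_le_boundary_cost_general (xmin xmax : ℝ)
    (n m : ℕ) (xS : Fin n → ℝ) (xD : Fin m → ℝ)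
    (hxS : ∀ i, xS i ∈ Set.Ioo xmin xmax) (hxD : ∀ i, xD i ∈ Set.Ioo xmin xmax)
    (mS : Fin n → ℝ) (mD : Fin m → ℝ) (hmS : ∀ i, 0 ≤ mS i) (hmD : ∀ i, 0 ≤ mD i) :
    FG1 xmin xmax
        (∑ i, ENNReal.ofReal (mS i) • Measure.dirac (xS i))
        (∑ i, ENNReal.ofReal (mD i) • Measure.dirac (xD i))
      ≤ ENNReal.ofReal
          (∑ i, mS i * min (xS i - xmin) (xmax - xS i)
            + ∑ i, mD i * min (xD i - xmin) (xmax - xD i)) := by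
  set d : ℝ → ℝ := fun x => min (x - xmin) (xmax - x)
  have hdist : ∀ x ∈ Ioo xmin xmax, 0 ≤ d x := fun x hx =>
    le_min (sub_nonneg.2 hx.1.le) (sub_nonneg.2 hx.2.le)
  refine (FG1_le_lintegral_boundary_dist _ _ (ae_mem_sum_smul_dirac fun i _ => hxS i)
    (ae_mem_sum_smul_dirac fun i _ => hxD i)).trans_eq ?_
  rw [lintegral_ofReal_sum_smul_dirac _ _ d (fun i _ => hmS i) (fun i _ => hdist _ (hxS i)),
    lintegral_ofReal_sum_smul_dirac _ _ d (fun i _ => hmD i) (fun i _ => hdist _ (hxD i)),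
    ENNReal.ofReal_add (Finset.sum_nonneg fun i _ => mul_nonneg (hmS i) (hdist _ (hxS i)))
      (Finset.sum_nonneg fun i _ => mul_nonneg (hmD i) (hdist _ (hxD i)))]

/-- For any two finite atomic measures supported in `Ω = (xmin, xmax)`,
the Figalli–Gigli distance is bounded above by the cost of transporting all of each
measure to its nearest boundary point:
`W₁^FG(μS, μD) ≤ ∫ dist(x, ∂Ω) dμS + ∫ dist(x, ∂Ω) dμD`. -/
theorem FG1_le_boundary_cost (xmin xmax : ℝ) (hx : xmin < xmax)
    (n m : ℕ) (xS : Fin n → ℝ) (xD : Fin m → ℝ)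
    (hxS : ∀ i, xS i ∈ Set.Ioo xmin xmax) (hxD : ∀ i, xD i ∈ Set.Ioo xmin xmax)
    (mS : Fin n → ℝ) (mD : Fin m → ℝ) (hmS : ∀ i, 0 ≤ mS i) (hmD : ∀ i, 0 ≤ mD i) :
    FG1 xmin xmax
        (∑ i, ENNReal.ofReal (mS i) • Measure.dirac (xS i))
        (∑ i, ENNReal.ofReal (mD i) • Measure.dirac (xD i))
      ≤ ENNReal.ofReal
          (∑ i, mS i * min (xS i - xmin) (xmax - xS i)
            + ∑ i, mD i * min (xD i - xmin) (xmax - xD i)) :=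
  FG1_le_boundary_cost_general xmin xmax n m xS xD hxS hxD mS mD hmS hmD
end
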